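/- For every composition α of n, the H_n(0)-module V_α = M_α/N_α is indecomposable: every idempotent module endomorphism of V_α is either 0 or the identity. -/

import Mathlib

/-- The 0-Hecke operator `π_{i+1}` on words `w : Fin n → ℕ`. -/
def heckeWord {n : ℕ} (i : Fin (n - 1)) (w : Fin n → ℕ) : Fin n → ℕ :=
  let p : Fin n := ⟨i, by have := i.isLt; omega⟩
  let q : Fin n := ⟨(i : ℕ) + 1, by have := i.isLt; omega⟩
  if w p < w q then w ∘ Equiv.swap p q else w

/-- A word is a `𝒴`-word if every occurrence of a letter `c+2` is preceded by an
occurrence of `c+1`. -/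
def IsYWordF {n : ℕ} (w : Fin n → ℕ) : Prop :=
  ∀ (p : Fin n) (c : ℕ), w p = c + 2 → ∃ q, q < p ∧ w q = c + 1

/-- A word has content `α`. -/
def WordHasContent {n : ℕ} (c : Composition n) (w : Fin n → ℕ) : Prop :=
  (∀ p, 1 ≤ w p ∧ w p ≤ c.length) ∧
  ∀ j : Fin c.length,
    (Finset.univ.filter fun p => w p = (j : ℕ) + 1).card = c.blocksFun j

/-- The quotient module `V_α = M_α / N_α`, realized with basis the `𝒴`-words of
content `α`. -/
abbrev Vmod (n : ℕ) (c : Composition n) :=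
  {w : Fin n → ℕ // WordHasContent c w ∧ IsYWordF w} →₀ ℚ

open Classical in
/-- The action of the 0-Hecke generator `π_{i+1}` on `V_α`: a basis `𝒴`-word is sent
to its image under `heckeWord` if that image is again a `𝒴`-word, and to `0`
otherwise (i.e. modulo the span `N_α` of non-`𝒴`-words). -/
noncomputable def heckeOp (n : ℕ) (c : Composition n) (i : Fin (n - 1)) :
    Vmod n c →ₗ[ℚ] Vmod n c :=
  Finsupp.lsum ℚ fun w =>
    LinearMap.toSpanSingleton ℚ (Vmod n c)
      (if h : WordHasContent c (heckeWord i w.val) ∧ IsYWordF (heckeWord i w.val)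
        then Finsupp.single (⟨heckeWord i w.val, h⟩ :
          {w : Fin n → ℕ // WordHasContent c w ∧ IsYWordF w}) (1 : ℚ)
        else 0)

/-!
The block word `1^{α₁} 2^{α₂} ⋯` is fixed by every `π_i` acting inside a block of `α`, and every
other `𝒴`-word ascends inside some block, so the vectors fixed by these `π_i` are the multiples of
the block word. Hence an endomorphism commuting with the action sends the block word to `a` times
itself; since the block word generates `V_α`, the endomorphism is `a • id`, and idempotence forces
`a ∈ {0, 1}`.
-/

open Finset

namespace Composition

variable {n : ℕ} (c : Composition n)

theorem index_eq_iff {p : Fin n} {j : Fin c.length} :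
    c.index p = j ↔ c.sizeUpTo j ≤ p ∧ (p : ℕ) < c.sizeUpTo (j + 1) := by
  rw [eq_comm, ← mem_range_embedding_iff', mem_range_embedding_iff]

theorem index_monotone : Monotone c.index := by
  intro p q hpq
  by_contra! h
  have h1 : c.sizeUpTo ((c.index q : ℕ) + 1) ≤ c.sizeUpTo (c.index p) := c.monotone_sizeUpTo h
  have h2 := c.lt_sizeUpTo_index_succ q
  have h3 := c.sizeUpTo_index_le p
  have : (p : ℕ) ≤ q := hpq
  simp only [Fin.val_succ] at h2
  omega

theorem card_filter_index_eq (j : Fin c.length) :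
    #{p | c.index p = j} = c.blocksFun j := by
  have : ({p | c.index p = j} : Finset (Fin n)) = univ.map (c.embedding j).toEmbedding := by
    ext p
    rw [mem_filter, eq_comm, ← mem_range_embedding_iff']
    simp
  rw [this, card_map, card_univ, Fintype.card_fin]

end Composition

section Words

variable {n : ℕ}

def leftPos (i : Fin (n - 1)) : Fin n := ⟨i, by omega⟩

def rightPos (i : Fin (n - 1)) : Fin n := ⟨i + 1, by omega⟩

theorem rightPos_val (i : Fin (n - 1)) : (rightPos i : ℕ) = leftPos i + 1 := rfl

theorem heckeWord_def (i : Fin (n - 1)) (w : Fin n → ℕ) :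
    heckeWord i w =
      if w (leftPos i) < w (rightPos i) then w ∘ Equiv.swap (leftPos i) (rightPos i) else w :=
  rfl

theorem heckeWord_of_not_lt {i : Fin (n - 1)} {w : Fin n → ℕ}
    (h : ¬ w (leftPos i) < w (rightPos i)) : heckeWord i w = w := by
  rw [heckeWord_def, if_neg h]

theorem heckeWord_comp_swap {i : Fin (n - 1)} {w : Fin n → ℕ}
    (h : w (rightPos i) < w (leftPos i)) :
    heckeWord i (w ∘ Equiv.swap (leftPos i) (rightPos i)) = w := by
  rw [heckeWord_def, if_pos (by simpa using h)]
  funext p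
  simp

theorem not_lt_heckeWord (i : Fin (n - 1)) (w : Fin n → ℕ) :
    ¬ heckeWord i w (leftPos i) < heckeWord i w (rightPos i) := by
  rw [heckeWord_def]
  split_ifs with h
  · simpa using h.le
  · exact h

theorem monotone_of_forall_le_rightPos {w : Fin n → ℕ}
    (h : ∀ i : Fin (n - 1), w (leftPos i) ≤ w (rightPos i)) : Monotone w := by
  obtain _ | m := n
  · exact fun p => p.elim0
  · exact Fin.monotone_iff_le_succ.2 fun p => h ⟨p, by simp⟩

theorem IsYWordF.comp_swap {w : Fin n → ℕ} (hY : IsYWordF w) {i : Fin (n - 1)}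
    (h : w (rightPos i) < w (leftPos i)) :
    IsYWordF (w ∘ Equiv.swap (leftPos i) (rightPos i)) := by
  intro p k hp
  obtain ⟨q, hqp, hq⟩ := hY _ k hp
  refine ⟨Equiv.swap (leftPos i) (rightPos i) q, ?_, by simpa using hq⟩
  have := rightPos_val i
  simp only [Function.comp_apply, Equiv.swap_apply_def] at *
  split_ifs at * <;> subst_vars <;> simp only [Fin.lt_def] at * <;> omega

theorem toLex_comp_swap_lt {w : Fin n → ℕ} {i : Fin (n - 1)} (h : w (rightPos i) < w (leftPos i)) :
    toLex (w ∘ Equiv.swap (leftPos i) (rightPos i)) < toLex w := by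
  refine ⟨leftPos i, fun j hj => ?_, by simpa using h⟩
  have hj' : j ≠ rightPos i := fun e => by
    rw [e, Fin.lt_def, rightPos_val] at hj
    omega
  simp [Equiv.swap_apply_of_ne_of_ne hj.ne hj']

namespace WordHasContent

variable {c : Composition n} {u v : Fin n → ℕ}

theorem card_filter_eq (hu : WordHasContent c u) (hv : WordHasContent c v) (a : ℕ) :
    #{p | u p = a} = #{p | v p = a} := by
  by_cases ha : 1 ≤ a ∧ a ≤ c.length
  · obtain ⟨j, rfl⟩ : ∃ j : Fin c.length, a = j + 1 := ⟨⟨a - 1, by omega⟩, by simp; omega⟩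
    rw [hu.2, hv.2]
  · have hempty : ∀ w : Fin n → ℕ, WordHasContent c w → #{p | w p = a} = 0 := fun w hw =>
      card_eq_zero.2 <| filter_eq_empty_iff.2 fun p _ hp => ha (hp ▸ hw.1 p)
    rw [hempty u hu, hempty v hv]

theorem map_univ_eq (hu : WordHasContent c u) (hv : WordHasContent c v) :
    univ.val.map u = univ.val.map v := by
  ext a
  have := hu.card_filter_eq hv a
  simp only [Multiset.count_map, eq_comm (a := a)]
  simpa [Finset.card_def] using this

theorem sum_eq (hu : WordHasContent c u) (hv : WordHasContent c v) :
    ∑ p, u p = ∑ p, v p := by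
  rw [sum_eq_multiset_sum, sum_eq_multiset_sum, hu.map_univ_eq hv]

theorem eq_of_le (hu : WordHasContent c u) (hv : WordHasContent c v) (h : ∀ p, u p ≤ v p) :
    u = v :=
  funext fun p => (sum_eq_sum_iff_of_le fun p _ => h p).1 (hu.sum_eq hv) p (mem_univ p)

theorem eq_of_monotone (hu : WordHasContent c u) (hv : WordHasContent c v)
    (hu' : Monotone u) (hv' : Monotone v) : u = v := by
  have hperm : List.Perm (List.ofFn u) (List.ofFn v) := by
    simpa [← Multiset.coe_eq_coe] using hu.map_univ_eq hv
  exact List.ofFn_injective (hperm.eq_of_sortedLE hu'.sortedLE_ofFn hv'.sortedLE_ofFn)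

theorem comp_perm (hu : WordHasContent c u) (σ : Equiv.Perm (Fin n)) :
    WordHasContent c (u ∘ σ) := by
  refine ⟨fun p => hu.1 (σ p), fun j => ?_⟩
  rw [← hu.2 j]
  exact card_equiv σ (by simp)

end WordHasContent

end Words

section BlockWord

variable {n : ℕ} (c : Composition n)

def blockWord : Fin n → ℕ := fun p => c.index p + 1

theorem blockWord_monotone : Monotone (blockWord c) :=
  fun _ _ h => Nat.succ_le_succ (c.index_monotone h)

theorem blockWord_hasContent : WordHasContent c (blockWord c) := by
  refine ⟨fun p => ⟨Nat.le_add_left _ _, (c.index p).isLt⟩, fun j => ?_⟩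
  rw [← c.card_filter_index_eq j]
  simp [blockWord, Fin.ext_iff]

theorem blockWord_isYWordF : IsYWordF (blockWord c) := by
  intro p k hp
  have hk : k < c.length := by have := (c.index p).isLt; simp only [blockWord] at hp; omega
  let q := c.embedding ⟨k, hk⟩ ⟨0, c.one_le_blocksFun _⟩
  have hq : c.index q = ⟨k, hk⟩ := c.index_embedding _ _
  refine ⟨q, lt_of_not_ge fun hpq => ?_, by simp [blockWord, hq]⟩
  have : (c.index p : ℕ) ≤ k := by simpa [hq, Fin.le_def] using c.index_monotone hpq
  simp only [blockWord] at hp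
  omega

theorem eq_blockWord_of_monotone {u : Fin n → ℕ} (hu : WordHasContent c u) (hmono : Monotone u) :
    u = blockWord c :=
  hu.eq_of_monotone (blockWord_hasContent c) hmono (blockWord_monotone c)

def NoAscentInBlocks (u : Fin n → ℕ) : Prop :=
  ∀ i : Fin (n - 1), c.index (leftPos i) = c.index (rightPos i) → u (rightPos i) ≤ u (leftPos i)

theorem le_blockWord {u : Fin n → ℕ} (hY : IsYWordF u) (hu : NoAscentInBlocks c u) (p : Fin n) :
    u p ≤ blockWord c p := by
  induction p using WellFoundedLT.induction with
  | _ p ih =>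
  have hstart := c.sizeUpTo_index_le p
  -- at the start of a block use `hY`, elsewhere the previous letter of the block
  rcases hstart.eq_or_lt with hfirst | hlater
  · by_contra! hbig
    obtain ⟨q, hqp, hq⟩ := hY p (u p - 2) (by simp only [blockWord] at hbig; omega)
    have hidx : c.index q < c.index p := lt_of_not_ge fun h => by
      have := c.monotone_sizeUpTo h
      have := c.sizeUpTo_index_le q
      rw [Fin.lt_def] at hqp
      omega
    have := ih q hqp
    simp only [blockWord, Fin.lt_def] at *
    omega
  · let i : Fin (n - 1) := ⟨p - 1, by omega⟩
    have hright : rightPos i = p := Fin.ext (by simp [rightPos, i]; omega)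
    have hleft : c.index (leftPos i) = c.index p :=
      (c.index_eq_iff).2 ⟨by simp [leftPos, i]; omega,
        by have := c.lt_sizeUpTo_index_succ p; simp [leftPos, i] at this ⊢; omega⟩
    have hdesc := hu i (by rw [hleft, hright])
    rw [hright] at hdesc
    have := ih (leftPos i) (by rw [Fin.lt_def]; simp [leftPos, i]; omega)
    simp only [blockWord, hleft] at this ⊢
    omega

theorem eq_blockWord_of_noAscentInBlocks {u : Fin n → ℕ} (hc : WordHasContent c u)
    (hY : IsYWordF u) (hu : NoAscentInBlocks c u) : u = blockWord c :=
  hc.eq_of_le (blockWord_hasContent c) (le_blockWord c hY hu)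

end BlockWord

section HeckeModule

variable {n : ℕ} (c : Composition n)

abbrev YWord (n : ℕ) (c : Composition n) := {w : Fin n → ℕ // WordHasContent c w ∧ IsYWordF w}

def blockYWord : YWord n c := ⟨blockWord c, blockWord_hasContent c, blockWord_isYWordF c⟩

variable {c}

theorem heckeOp_single {i : Fin (n - 1)} {w v : YWord n c} (h : heckeWord i w.val = v.val)
    (r : ℚ) : heckeOp n c i (Finsupp.single w r) = Finsupp.single v r := by
  rw [heckeOp, Finsupp.lsum_single, LinearMap.toSpanSingleton_apply, dif_pos (h ▸ v.2),
    Finsupp.smul_single_one]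
  exact congrArg (Finsupp.single · r) (Subtype.ext h)

theorem heckeOp_apply_eq_zero {i : Fin (n - 1)} (x : Vmod n c) {u : YWord n c}
    (hu : u.val (leftPos i) < u.val (rightPos i)) : heckeOp n c i x u = 0 := by
  induction x using Finsupp.induction_linear with
  | zero => simp
  | add x y hx hy => simp [hx, hy]
  | single w r =>
    rw [heckeOp, Finsupp.lsum_single, LinearMap.toSpanSingleton_apply]
    split_ifs
    · rw [Finsupp.smul_apply, Finsupp.single_eq_of_ne, smul_zero]
      rintro rfl
      exact not_lt_heckeWord i w.val hu
    · simp

theorem heckeOp_single_blockYWord {i : Fin (n - 1)}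
    (hi : c.index (leftPos i) = c.index (rightPos i)) (r : ℚ) :
    heckeOp n c i (Finsupp.single (blockYWord c) r) = Finsupp.single (blockYWord c) r :=
  heckeOp_single (heckeWord_of_not_lt (by simp [blockYWord, blockWord, hi])) r

/-- Every `𝒴`-word other than the block word ascends inside some block, so lies outside the
image of the corresponding `π_i`. -/
theorem eq_single_blockYWord_of_heckeOp_eq {x : Vmod n c}
    (hx : ∀ i, c.index (leftPos i) = c.index (rightPos i) → heckeOp n c i x = x) :
    x = Finsupp.single (blockYWord c) (x (blockYWord c)) := by
  ext u
  by_cases hu : u = blockYWord c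
  · rw [hu, Finsupp.single_eq_same]
  rw [Finsupp.single_apply, if_neg (Ne.symm hu)]
  have hascent : ¬ NoAscentInBlocks c u.val := fun h =>
    hu (Subtype.ext (eq_blockWord_of_noAscentInBlocks c u.2.1 u.2.2 h))
  obtain ⟨i, hi, hlt⟩ : ∃ i, c.index (leftPos i) = c.index (rightPos i) ∧
      u.val (leftPos i) < u.val (rightPos i) := by
    simpa [NoAscentInBlocks] using hascent
  rw [← hx i hi]
  exact heckeOp_apply_eq_zero x hlt

/-- The block word generates `V_α`: any other `𝒴`-word has a descent, and is the image under the
corresponding `π_i` of the lexicographically smaller word in which that descent is undone. -/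
theorem eq_top_of_heckeOp_mem (p : Submodule ℚ (Vmod n c))
    (hp : ∀ i, ∀ x ∈ p, heckeOp n c i x ∈ p) (hE : Finsupp.single (blockYWord c) 1 ∈ p) :
    p = ⊤ := by
  have hsingle : ∀ w : Lex (Fin n → ℕ), ∀ u : YWord n c, toLex u.val = w →
      Finsupp.single u 1 ∈ p := by
    intro w
    induction w using WellFoundedLT.induction with
    | _ w ih =>
    rintro u rfl
    by_cases hdesc : ∃ i, u.val (rightPos i) < u.val (leftPos i)
    · obtain ⟨i, hi⟩ := hdesc
      let u' : YWord n c := ⟨_, u.2.1.comp_perm _, u.2.2.comp_swap hi⟩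
      rw [← heckeOp_single (w := u') (heckeWord_comp_swap hi)]
      exact hp i _ (ih _ (toLex_comp_swap_lt hi) u' rfl)
    · simp only [not_exists, not_lt] at hdesc
      have : u = blockYWord c :=
        Subtype.ext (eq_blockWord_of_monotone c u.2.1 (monotone_of_forall_le_rightPos hdesc))
      rwa [this]
  refine Submodule.eq_top_iff'.2 fun x => ?_
  induction x using Finsupp.induction_linear with
  | zero => exact p.zero_mem
  | add x y hx hy => exact p.add_mem hx hy
  | single u r => simpa using p.smul_mem r (hsingle _ u rfl)

theorem eq_smul_id_of_commute_heckeOp {f : Vmod n c →ₗ[ℚ] Vmod n c}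
    (hcomm : ∀ i x, f (heckeOp n c i x) = heckeOp n c i (f x)) :
    f = f (Finsupp.single (blockYWord c) 1) (blockYWord c) • LinearMap.id := by
  set a := f (Finsupp.single (blockYWord c) 1) (blockYWord c)
  have hE : f (Finsupp.single (blockYWord c) 1) = a • Finsupp.single (blockYWord c) 1 := by
    rw [Finsupp.smul_single_one]
    exact eq_single_blockYWord_of_heckeOp_eq fun i hi => by
      rw [← hcomm, heckeOp_single_blockYWord hi]
  have htop := eq_top_of_heckeOp_mem (Module.End.eigenspace f a)
    (fun i x hx => by
      rw [Module.End.mem_eigenspace_iff] at hx ⊢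
      rw [hcomm, hx, map_smul])
    (Module.End.mem_eigenspace_iff.2 hE)
  exact LinearMap.ext fun x => Module.End.mem_eigenspace_iff.1 (htop ▸ Submodule.mem_top)

end HeckeModule

/-- For every composition `α` of `n`, the `H_n(0)`-module `V_α = M_α/N_α` is
indecomposable: every idempotent module endomorphism (a linear endomorphism
commuting with the 0-Hecke action) is `0` or the identity. -/
theorem Vmod_indecomposable (n : ℕ) (c : Composition n)
    (f : Vmod n c →ₗ[ℚ] Vmod n c)
    (hcomm : ∀ i : Fin (n - 1), f ∘ₗ heckeOp n c i = heckeOp n c i ∘ₗ f)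
    (hidem : f ∘ₗ f = f) :
    f = 0 ∨ f = LinearMap.id := by
  set E := Finsupp.single (blockYWord c) (1 : ℚ)
  have hf := eq_smul_id_of_commute_heckeOp fun i x => LinearMap.congr_fun (hcomm i) x
  set a := f E (blockYWord c)
  have ha : a * a = a := by
    have := congrArg (· (blockYWord c)) (LinearMap.congr_fun hidem E)
    simpa [hf, E] using this
  rcases IsIdempotentElem.iff_eq_zero_or_one.1 ha with h | h
  · left; rw [hf, h, zero_smul]
  · right; rw [hf, h, one_smul]
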